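/- arXiv:math/0601641 — 7 statements merged into one kernel-verified Lean document; each statement's English description precedes it below -/
import Mathlib

section
/- Let A ⊂ ℝⁿ be a compact set, let τ : ℝⁿ → ℝ^m and q : ℝⁿ → ℝ be continuous maps, and suppose there is a class-K function ρ such that |q(z₁) − q(z₂)| ≤ ρ(‖τ(z₁) − τ(z₂)‖) for all z₁, z₂ ∈ A. Then there exists a continuous map γ : ℝ^m → ℝ such that q(z) + γ(τ(z)) = 0 for all z ∈ A. -/
open Set Filter Topology Metric MeasureTheory

noncomputable section

/-- A global (forward-complete) solution of the ODE `ẋ = F x` on `[0, ∞)`. -/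
def IsGlobalSol {E : Type*} [NormedAddCommGroup E] [NormedSpace ℝ E]
    (F : E → E) (p : ℝ → E) : Prop :=
  ∀ t : ℝ, 0 ≤ t → HasDerivAt p (F (p t)) t

/-- The compact set `B` is asymptotically stable for `ẋ = F x` with domain of attraction
the open set `D ⊇ B`: (i) uniform stability (solutions starting close to `B` exist globally
and stay close), (ii) every solution starting in `D` exists globally and converges to `B`. -/
def IsAsympStable {E : Type*} [NormedAddCommGroup E] [NormedSpace ℝ E]
    (F : E → E) (B D : Set E) : Prop :=
  IsCompact B ∧ IsOpen D ∧ B ⊆ D ∧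
  (∀ ε > (0:ℝ), ∃ δ > (0:ℝ),
    (∀ x₀ : E, infDist x₀ B ≤ δ → ∃ p : ℝ → E, IsGlobalSol F p ∧ p 0 = x₀) ∧
    ∀ p : ℝ → E, IsGlobalSol F p → infDist (p 0) B ≤ δ →
      ∀ t : ℝ, 0 ≤ t → infDist (p t) B ≤ ε) ∧
  (∀ x₀ ∈ D, ∃ p : ℝ → E, IsGlobalSol F p ∧ p 0 = x₀) ∧
  ∀ p : ℝ → E, IsGlobalSol F p → p 0 ∈ D →
    Tendsto (fun t => infDist (p t) B) atTop (nhds 0)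

/-- The compact set `B` is in addition locally exponentially stable for `ẋ = F x`. -/
def IsLocExpStable {E : Type*} [NormedAddCommGroup E] [NormedSpace ℝ E]
    (F : E → E) (B : Set E) : Prop :=
  ∃ M : ℝ, 1 ≤ M ∧ ∃ lam > (0:ℝ), ∃ c₀ > (0:ℝ),
    ∀ p : ℝ → E, IsGlobalSol F p → infDist (p 0) B ≤ c₀ →
      ∀ t : ℝ, 0 ≤ t → infDist (p t) B ≤ M * Real.exp (-lam * t) * infDist (p 0) B

/-- A class-`K` function `[0,∞) → [0,∞)`: continuous, strictly increasing, vanishing at `0`. -/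
def IsClassK (ρ : ℝ → ℝ) : Prop :=
  ContinuousOn ρ (Ici 0) ∧ StrictMonoOn ρ (Ici 0) ∧ ρ 0 = 0

/-- A class-`K∞` function. -/
def IsClassKInf (ρ : ℝ → ℝ) : Prop :=
  IsClassK ρ ∧ Tendsto ρ atTop atTop

/-- A class-`KL` function. -/
def IsClassKL (β : ℝ → ℝ → ℝ) : Prop :=
  (∀ t : ℝ, 0 ≤ t → IsClassK fun s => β s t) ∧
  ∀ s : ℝ, 0 ≤ s → AntitoneOn (fun t => β s t) (Ici 0) ∧
    Tendsto (fun t => β s t) atTop (nhds 0)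

/-- `F` is Hurwitz: `‖exp (t F)‖ ≤ c e^{-λ t}` for all `t ≥ 0`, for some `c ≥ 1`, `λ > 0`. -/
def IsHurwitz {m : ℕ} (F : Matrix (Fin m) (Fin m) ℝ) : Prop :=
  ∃ c : ℝ, 1 ≤ c ∧ ∃ lam > (0:ℝ), ∀ t : ℝ, 0 ≤ t →
    ∀ x : Fin m → ℝ, ‖(NormedSpace.exp (t • F)).mulVec x‖ ≤ c * Real.exp (-lam * t) * ‖x‖

/-- `(F, G)` is a controllable pair: `G, FG, …, F^{m-1}G` span `ℝ^m`. -/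
def IsControllablePair {m : ℕ} (F : Matrix (Fin m) (Fin m) ℝ) (G : Fin m → ℝ) : Prop :=
  Submodule.span ℝ (Set.range fun i : Fin m => (F ^ (i : ℕ)).mulVec G) = ⊤

open Classical in
/-- The weighted distance `|p|_{B/D} = (1 + 1/dist(p, ∂ cl D)) · dist(p, B)`
(with the convention `|p|_{B/D} = dist(p,B)` when `D` is the whole space). -/
def relDist {E : Type*} [NormedAddCommGroup E] (B D : Set E) (p : E) : ℝ :=
  if D = univ then infDist p B
  else (1 + 1 / infDist p (frontier (closure D))) * infDist p B

/-! If `τ z₁ = τ z₂` then the hypothesis gives `|q z₁ - q z₂| ≤ ρ 0 = 0`, so `q` is constant on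
the fibres of `τ` over `A`. Since `A` is compact and `ℝᵐ` is Hausdorff, `τ : A → τ(A)` is a
closed, hence quotient, map, so `q` descends to a continuous function on the compact set `τ(A)`,
which Tietze extends to all of `ℝᵐ`. -/

universe u v

theorem exists_continuousMap_comp_eqOn_of_isCompact {X : Type*} {Y : Type u} {Z : Type v}
    [TopologicalSpace X] [TopologicalSpace Y] [T2Space Y] [NormalSpace Y] [TopologicalSpace Z] [TietzeExtension.{u, v} Z]
    {A : Set X} (hA : IsCompact A) {τ : X → Y} {q : X → Z}
    (hτ : ContinuousOn τ A) (hq : ContinuousOn q A)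
    (hfib : ∀ z₁ ∈ A, ∀ z₂ ∈ A, τ z₁ = τ z₂ → q z₁ = q z₂) :
    ∃ γ : C(Y, Z), ∀ z ∈ A, γ (τ z) = q z := by
  have := isCompact_iff_compactSpace.mp hA
  let f : C(A, τ '' A) := ⟨A.imageFactorization τ, hτ.domRestrict.subtype_mk _⟩
  have hquot : IsQuotientMap f :=
    f.continuous.isClosedMap.isQuotientMap f.continuous imageFactorization_surjective
  let g : C(A, Z) := ⟨A.domRestrict q, hq.domRestrict⟩
  have hg : Function.FactorsThrough g f := fun a b hab =>
    hfib a a.2 b b.2 (congrArg Subtype.val hab)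
  obtain ⟨γ, hγ⟩ :=
    ContinuousMap.exists_restrict_eq (hA.image_of_continuousOn hτ).isClosed (hquot.lift g hg)
  refine ⟨γ, fun z hz => ?_⟩
  exact (DFunLike.congr_fun hγ ⟨τ z, mem_image_of_mem τ hz⟩).trans
    (DFunLike.congr_fun (hquot.lift_comp g hg) ⟨z, hz⟩)

/-- Proposition 3, first claim: under the class-`K` partial injectivity bound on
the compact set `A`, there is a continuous `γ : ℝᵐ → ℝ` with `q(z) + γ(τ(z)) = 0` on `A`. -/
theorem statement_6
    (n m : ℕ) (A : Set (Fin n → ℝ)) (hA : IsCompact A)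
    (τ : (Fin n → ℝ) → (Fin m → ℝ)) (q : (Fin n → ℝ) → ℝ)
    (hτ : Continuous τ) (hq : Continuous q)
    (ρ : ℝ → ℝ) (hρ : IsClassK ρ)
    (hinj : ∀ z₁ ∈ A, ∀ z₂ ∈ A, |q z₁ - q z₂| ≤ ρ ‖τ z₁ - τ z₂‖) :
    ∃ γ : (Fin m → ℝ) → ℝ, Continuous γ ∧ ∀ z ∈ A, q z + γ (τ z) = 0 := by
  have hfib : ∀ z₁ ∈ A, ∀ z₂ ∈ A, τ z₁ = τ z₂ → -q z₁ = -q z₂ := by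
    intro z₁ h₁ z₂ h₂ hτz
    have h := hinj z₁ h₁ z₂ h₂
    rw [hτz, sub_self, norm_zero, hρ.2.2, abs_nonpos_iff, sub_eq_zero] at h
    rw [h]
  obtain ⟨γ, hγ⟩ := exists_continuousMap_comp_eqOn_of_isCompact hA hτ.continuousOn
    hq.neg.continuousOn hfib
  exact ⟨γ, γ.continuous, fun z hz => by rw [hγ z hz, Pi.neg_apply, add_neg_cancel]⟩
end
end

section
/- Let A ⊂ ℝⁿ be a compact set, let τ : ℝⁿ → ℝ^m and q : ℝⁿ → ℝ be continuous maps, and suppose there is a class-K function ρ such that |q(z₁) − q(z₂)| ≤ ρ(‖τ(z₁) − τ(z₂)‖) for all z₁, z₂ ∈ A. If in addition ρ is linearly bounded at the origin, i.e. there are L > 0 and s₀ > 0 with ρ(s) ≤ L s for all s ∈ [0, s₀], then there exists a (globally) Lipschitz map γ : ℝ^m → ℝ such that q(z) + γ(τ(z)) = 0 for all z ∈ A. -/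
open Set Filter Topology Metric MeasureTheory

noncomputable section

/-!
Since `ρ 0 = 0`, `q` is constant on the fibres of `τ` in `A`, so `q = f ∘ τ` on `A` for some `f`.
On `τ '' A`, `f` has modulus of continuity `ρ`, hence slope at most `L` at distances below `s₀`,
while at larger distances its increments are at most `2 max |q| / s₀` times the distance. So `f`
is Lipschitz on `τ '' A`, and `γ` is minus its McShane extension.
-/
theorem exists_eqOn_comp_of_eq_imp_eq {α β γ : Type*} [Nonempty γ] {τ : α → β} {q : α → γ}
    {A : Set α} (h : ∀ z₁ ∈ A, ∀ z₂ ∈ A, τ z₁ = τ z₂ → q z₁ = q z₂) :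
    ∃ f : β → γ, EqOn (f ∘ τ) q A := by
  have hfac : (A.domRestrict q).FactorsThrough (A.domRestrict τ) :=
    fun z₁ z₂ he => h z₁ z₁.2 z₂ z₂.2 he
  exact ⟨Function.extend (A.domRestrict τ) (A.domRestrict q) fun _ => Classical.arbitrary γ,
    fun z hz => hfac.extend_apply _ ⟨z, hz⟩⟩

theorem lipschitzOnWith_of_abs_sub_le_of_bounded {α : Type*} [PseudoMetricSpace α]
    {f : α → ℝ} {s : Set α} {ρ : ℝ → ℝ} {L s₀ C : ℝ} (hs₀ : 0 < s₀)
    (hρ : ∀ t ∈ Icc 0 s₀, ρ t ≤ L * t) (hC : ∀ x ∈ s, |f x| ≤ C)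
    (hf : ∀ x ∈ s, ∀ y ∈ s, |f x - f y| ≤ ρ (dist x y)) :
    LipschitzOnWith (max L (2 * C / s₀)).toNNReal f s := by
  refine LipschitzOnWith.of_dist_le' fun x hx y hy => ?_
  rw [Real.dist_eq]
  rcases le_or_gt (dist x y) s₀ with hd | hd
  · calc |f x - f y| ≤ ρ (dist x y) := hf x hx y hy
      _ ≤ L * dist x y := hρ _ ⟨dist_nonneg, hd⟩
      _ ≤ max L (2 * C / s₀) * dist x y := by gcongr; exact le_max_left _ _
  · have hC₀ : 0 ≤ C := (abs_nonneg _).trans (hC x hx)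
    calc |f x - f y| ≤ |f x| + |f y| := abs_sub _ _
      _ ≤ 2 * C / s₀ * s₀ := by
        rw [div_mul_cancel₀ _ hs₀.ne']
        linarith [hC x hx, hC y hy]
      _ ≤ max L (2 * C / s₀) * dist x y := by
        gcongr
        exact le_max_right _ _

theorem exists_lipschitzWith_eqOn_comp_of_abs_sub_le {α β : Type*} [PseudoMetricSpace β]
    {τ : α → β} {q : α → ℝ} {A : Set α} {ρ : ℝ → ℝ} {L s₀ C : ℝ} (hρ₀ : ρ 0 = 0)
    (hs₀ : 0 < s₀) (hρ : ∀ t ∈ Icc 0 s₀, ρ t ≤ L * t) (hC : ∀ z ∈ A, |q z| ≤ C)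
    (hq : ∀ z₁ ∈ A, ∀ z₂ ∈ A, |q z₁ - q z₂| ≤ ρ (dist (τ z₁) (τ z₂))) :
    ∃ g : β → ℝ, (∃ K : NNReal, LipschitzWith K g) ∧ EqOn (g ∘ τ) q A := by
  obtain ⟨f, hf⟩ := exists_eqOn_comp_of_eq_imp_eq (τ := τ) (q := q) fun z₁ h₁ z₂ h₂ he => by
    have h := hq z₁ h₁ z₂ h₂
    rw [he, dist_self, hρ₀] at h
    exact sub_eq_zero.1 (abs_nonpos_iff.1 h)
  have hlip : LipschitzOnWith (max L (2 * C / s₀)).toNNReal f (τ '' A) := by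
    refine lipschitzOnWith_of_abs_sub_le_of_bounded hs₀ hρ
      (forall_mem_image.2 fun z hz => ?_)
      (forall_mem_image.2 fun z₁ h₁ => forall_mem_image.2 fun z₂ h₂ => ?_)
    · rw [show f (τ z) = q z from hf hz]
      exact hC z hz
    · rw [show f (τ z₁) = q z₁ from hf h₁, show f (τ z₂) = q z₂ from hf h₂]
      exact hq z₁ h₁ z₂ h₂
  obtain ⟨g, hg, hfg⟩ := hlip.extend_real
  exact ⟨g, ⟨_, hg⟩, fun z hz => (hfg (mem_image_of_mem τ hz)).symm.trans (hf hz)⟩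

theorem statement_7_general
    (n m : ℕ) (A : Set (Fin n → ℝ)) (hA : IsCompact A)
    (τ : (Fin n → ℝ) → (Fin m → ℝ)) (q : (Fin n → ℝ) → ℝ)
    (hq : Continuous q)
    (ρ : ℝ → ℝ) (hρ : IsClassK ρ)
    (hinj : ∀ z₁ ∈ A, ∀ z₂ ∈ A, |q z₁ - q z₂| ≤ ρ ‖τ z₁ - τ z₂‖)
    (hlin : ∃ L > (0:ℝ), ∃ s₀ > (0:ℝ), ∀ s ∈ Icc 0 s₀, ρ s ≤ L * s) :
    ∃ γ : (Fin m → ℝ) → ℝ, (∃ Kγ : NNReal, LipschitzWith Kγ γ) ∧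
      ∀ z ∈ A, q z + γ (τ z) = 0 := by
  obtain ⟨L, -, s₀, hs₀, hρL⟩ := hlin
  obtain ⟨C, hC⟩ := hA.exists_bound_of_continuousOn hq.continuousOn
  obtain ⟨g, ⟨K, hg⟩, hgq⟩ := exists_lipschitzWith_eqOn_comp_of_abs_sub_le hρ.2.2 hs₀ hρL
    (fun z hz => Real.norm_eq_abs (q z) ▸ hC z hz)
    fun z₁ h₁ z₂ h₂ => dist_eq_norm (τ z₁) (τ z₂) ▸ hinj z₁ h₁ z₂ h₂
  exact ⟨-g, ⟨K, hg.neg⟩, fun z hz => by simp [← hgq hz]⟩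

/-- Proposition 3, second claim: if in addition the class-`K` function `ρ` is
linearly bounded at the origin, then `γ` can be chosen globally Lipschitz. -/
theorem statement_7
    (n m : ℕ) (A : Set (Fin n → ℝ)) (hA : IsCompact A)
    (τ : (Fin n → ℝ) → (Fin m → ℝ)) (q : (Fin n → ℝ) → ℝ)
    (hτ : Continuous τ) (hq : Continuous q)
    (ρ : ℝ → ℝ) (hρ : IsClassK ρ)
    (hinj : ∀ z₁ ∈ A, ∀ z₂ ∈ A, |q z₁ - q z₂| ≤ ρ ‖τ z₁ - τ z₂‖)
    (hlin : ∃ L > (0:ℝ), ∃ s₀ > (0:ℝ), ∀ s ∈ Icc 0 s₀, ρ s ≤ L * s) :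
    ∃ γ : (Fin m → ℝ) → ℝ, (∃ Kγ : NNReal, LipschitzWith Kγ γ) ∧
      ∀ z ∈ A, q z + γ (τ z) = 0 :=
  statement_7_general n m A hA τ q hq ρ hρ hinj hlin
end
end

section
/- Let f : ℝⁿ → ℝⁿ be continuously differentiable and bounded, with ‖Df(z)‖ ≤ ℓ (operator norm) for all z ∈ ℝⁿ, and let φ : ℝ × ℝⁿ → ℝⁿ be its complete flow. Let q : ℝⁿ → ℝ be continuously differentiable with q and Dq bounded, and let g be a nonzero real number. Then for every λ ∈ ℂ with Re λ < −ℓ, the map τ_λ : ℝⁿ → ℂ defined by τ_λ(z) = ∫_{−∞}^0 e^{−λ s} g q(φ(s,z)) ds is well defined (the integral converges absolutely) and continuously differentiable on ℝⁿ. -/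
open Set Filter Topology Metric MeasureTheory

noncomputable section

open scoped NNReal

/-!
Running time backwards, `t ↦ φ (-t)` is a flow of `-f`. Its spatial derivative `W z t` solves the
variational equation `W' = Df(φ(-t,z)) ∘ W`, `W 0 = id`, a linear equation solved by Picard
iteration, which also gives `‖W z t‖ ≤ e^{ℓ|t|}`. Grönwall's inequality, together with the uniform
continuity of `Df` near a compact arc of trajectory, shows that `W z t` is the derivative of the
flow and that it is continuous in `z`. For `s ≤ 0` the `z`-derivative of the integrand is therefore
bounded by `C e^{(-Re λ - ℓ) s}`, which is integrable on `(-∞, 0]` exactly because `Re λ < -ℓ`,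
and differentiation under the integral sign gives a `C¹` map.
-/

theorem gronwallBound_zero_eq_mul (K ε x : ℝ) :
    gronwallBound 0 K ε x = ε * gronwallBound 0 K 1 x := by
  rcases eq_or_ne K 0 with rfl | hK
  · simp [gronwallBound_K0]
  · simp only [gronwallBound_of_K_ne_0 hK]; ring

theorem Asymptotics.isLittleO_of_forall_eventually_le_mul {α E F : Type*} [Norm E]
    [SeminormedAddGroup F] {l : Filter α} {f : α → E} {g : α → F} (C : ℝ)
    (h : ∀ ε > 0, ∀ᶠ x in l, ‖f x‖ ≤ ε * C * ‖g x‖) : f =o[l] g := by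
  refine Asymptotics.isLittleO_iff.2 fun c hc => ?_
  filter_upwards [h (c / (|C| + 1)) (by positivity)] with x hx
  refine hx.trans (mul_le_mul_of_nonneg_right ?_ (norm_nonneg _))
  calc c / (|C| + 1) * C ≤ c / (|C| + 1) * (|C| + 1) := by
        gcongr; linarith [le_abs_self C]
    _ = c := by field_simp

theorem IsCompact.exists_pos_forall_dist_lt {α β : Type*} [PseudoMetricSpace α]
    [PseudoMetricSpace β] {s : Set α} (hs : IsCompact s) {f : α → β} (hf : Continuous f)
    {ε : ℝ} (hε : 0 < ε) : ∃ δ > 0, ∀ x ∈ s, ∀ y, dist x y < δ → dist (f x) (f y) < ε := by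
  obtain ⟨δ, hδ, h⟩ := Metric.mem_uniformity_dist.1 <|
    hs.uniformContinuousAt_of_continuousAt f (fun x _ => hf.continuousAt)
      (Metric.dist_mem_uniformity hε)
  exact ⟨δ, hδ, fun x hx y hxy => h hxy hx⟩

theorem lipschitzWith_of_forall_norm_fderiv_le {E G : Type*} [NormedAddCommGroup E]
    [NormedSpace ℝ E] [NormedAddCommGroup G] [NormedSpace ℝ G] {F : E → G} {K : ℝ≥0}
    (hF : Differentiable ℝ F) (hFK : ∀ x, ‖fderiv ℝ F x‖ ≤ K) : LipschitzWith K F :=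
  lipschitzWith_of_nnnorm_fderiv_le hF fun x => by exact_mod_cast hFK x

theorem norm_sub_sub_fderiv_le_of_forall_dist_le {E G : Type*} [NormedAddCommGroup E]
    [NormedSpace ℝ E] [NormedAddCommGroup G] [NormedSpace ℝ G] {F : E → G}
    (hF : Differentiable ℝ F) {x y : E} {ε : ℝ}
    (h : ∀ w, dist w y ≤ dist x y → ‖fderiv ℝ F w - fderiv ℝ F y‖ ≤ ε) :
    ‖F x - F y - fderiv ℝ F y (x - y)‖ ≤ ε * ‖x - y‖ :=
  (convex_closedBall y (dist x y)).norm_image_sub_le_of_norm_fderiv_le'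
    (fun w _ => hF w) (fun w hw => h w (mem_closedBall.1 hw))
    (mem_closedBall_self dist_nonneg) (mem_closedBall.2 le_rfl)

theorem contDiff_one_integral_of_dominated {α E G : Type*} [MeasurableSpace α] {μ : Measure α}
    [NormedAddCommGroup E] [NormedSpace ℝ E] [NormedAddCommGroup G] [NormedSpace ℝ G]
    {F : E → α → G} {F' : E → α → E →L[ℝ] G} {bound : α → ℝ}
    (hF_int : ∀ z, Integrable (F z) μ) (hF'_meas : ∀ z, AEStronglyMeasurable (F' z) μ)
    (h_bound : ∀ᵐ a ∂μ, ∀ z, ‖F' z a‖ ≤ bound a) (bound_integrable : Integrable bound μ)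
    (h_diff : ∀ᵐ a ∂μ, ∀ z, HasFDerivAt (F · a) (F' z a) z)
    (h_cont : ∀ᵐ a ∂μ, Continuous (F' · a)) :
    ContDiff ℝ 1 fun z => ∫ a, F z a ∂μ := by
  have hderiv : ∀ z, HasFDerivAt (fun z => ∫ a, F z a ∂μ) (∫ a, F' z a ∂μ) z := fun z =>
    hasFDerivAt_integral_of_dominated_of_fderiv_le univ_mem
      (.of_forall fun z => (hF_int z).aestronglyMeasurable) (hF_int z) (hF'_meas z)
      (h_bound.mono fun _ h z _ => h z) bound_integrable (h_diff.mono fun _ h z _ => h z)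
  refine contDiff_one_iff_fderiv.2 ⟨fun z => (hderiv z).differentiableAt, ?_⟩
  rw [funext fun z => (hderiv z).fderiv]
  exact continuous_of_dominated hF'_meas (fun z => h_bound.mono fun _ h => h z)
    bound_integrable h_cont

theorem integrableOn_Iic_of_norm_le_mul_exp {G : Type*} [NormedAddCommGroup G] {h : ℝ → G}
    (hh : Continuous h) {C a : ℝ} (ha : 0 < a) (hle : ∀ s ≤ 0, ‖h s‖ ≤ C * Real.exp (a * s)) :
    IntegrableOn h (Iic 0) :=
  ((integrableOn_exp_mul_Iic ha 0).const_mul C).mono' hh.aestronglyMeasurable.restrict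
    ((ae_restrict_iff' measurableSet_Iic).2 (.of_forall hle))

section LinearODE

variable {X : Type*} [NormedAddCommGroup X] [NormedSpace ℝ X]

theorem norm_integral_le_mul_pow_succ_div_of_nonneg {g : ℝ → X} {M : ℝ} {n : ℕ}
    (hb : ∀ s, ‖g s‖ ≤ M * |s| ^ n) {t : ℝ} (ht : 0 ≤ t) :
    ‖∫ s in (0:ℝ)..t, g s‖ ≤ M * t ^ (n + 1) / (n + 1) := by
  calc ‖∫ s in (0:ℝ)..t, g s‖ ≤ ∫ s in (0:ℝ)..t, M * s ^ n :=
        intervalIntegral.norm_integral_le_of_norm_le ht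
          (ae_of_all _ fun s hs => by simpa [abs_of_pos hs.1] using hb s)
          (by apply Continuous.intervalIntegrable; fun_prop)
    _ = M * t ^ (n + 1) / (n + 1) := by
        rw [intervalIntegral.integral_const_mul, integral_pow]; ring

theorem norm_integral_le_mul_abs_pow_succ_div {g : ℝ → X} {M : ℝ} {n : ℕ}
    (hb : ∀ s, ‖g s‖ ≤ M * |s| ^ n) (t : ℝ) :
    ‖∫ s in (0:ℝ)..t, g s‖ ≤ M * |t| ^ (n + 1) / (n + 1) := by
  rcases le_total 0 t with ht | ht
  · simpa [abs_of_nonneg ht] using norm_integral_le_mul_pow_succ_div_of_nonneg hb ht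
  · have h := norm_integral_le_mul_pow_succ_div_of_nonneg (g := fun s => g (-s))
      (fun s => by simpa using hb (-s)) (neg_nonneg.2 ht)
    rw [intervalIntegral.integral_comp_neg, neg_neg, neg_zero] at h
    rwa [intervalIntegral.integral_symm, norm_neg, abs_of_nonpos ht]

def picardIterate (B : ℝ → X →L[ℝ] X) (x₀ : X) : ℕ → ℝ → X
  | 0 => fun _ => x₀
  | n + 1 => fun t => ∫ s in (0:ℝ)..t, B s (picardIterate B x₀ n s)

def linearODESol (B : ℝ → X →L[ℝ] X) (x₀ : X) (t : ℝ) : X :=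
  ∑' n, picardIterate B x₀ n t

variable {B : ℝ → X →L[ℝ] X} (x₀ : X)

theorem continuous_picardIterate (hB : Continuous B) :
    ∀ n, Continuous (picardIterate B x₀ n)
  | 0 => continuous_const
  | n + 1 => intervalIntegral.continuous_primitive
      (fun _ _ => (hB.clm_apply (continuous_picardIterate hB n)).intervalIntegrable _ _) 0

theorem linearODESol_zero : linearODESol B x₀ 0 = x₀ := by
  rw [linearODESol, tsum_eq_single 0 fun n hn => ?_]
  · rfl
  · obtain ⟨m, rfl⟩ := Nat.exists_eq_succ_of_ne_zero hn
    exact intervalIntegral.integral_same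

theorem norm_picardIterate_le {K : ℝ≥0} (hBK : ∀ t, ‖B t‖ ≤ K) :
    ∀ n t, ‖picardIterate B x₀ n t‖ ≤ ‖x₀‖ * (K * |t|) ^ n / n.factorial
  | 0, t => by simp [picardIterate]
  | n + 1, t => by
    have hb : ∀ s, ‖B s (picardIterate B x₀ n s)‖ ≤ ‖x₀‖ * K ^ (n + 1) / n.factorial * |s| ^ n :=
      fun s => calc
        ‖B s (picardIterate B x₀ n s)‖ ≤ ‖B s‖ * ‖picardIterate B x₀ n s‖ := (B s).le_opNorm _
        _ ≤ K * (‖x₀‖ * (K * |s|) ^ n / n.factorial) :=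
          mul_le_mul (hBK s) (norm_picardIterate_le hBK n s) (norm_nonneg _) K.2
        _ = ‖x₀‖ * K ^ (n + 1) / n.factorial * |s| ^ n := by ring
    refine (norm_integral_le_mul_abs_pow_succ_div hb t).trans_eq ?_
    rw [Nat.factorial_succ]
    push_cast
    field_simp
    ring

theorem summable_norm_picardIterate {K : ℝ≥0} (hBK : ∀ t, ‖B t‖ ≤ K)
    (t : ℝ) : Summable fun n => ‖picardIterate B x₀ n t‖ := by
  refine Summable.of_nonneg_of_le (fun _ => norm_nonneg _) (fun n => ?_)
    ((Real.summable_pow_div_factorial (K * |t|)).mul_left ‖x₀‖)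
  exact (norm_picardIterate_le x₀ hBK n t).trans_eq (mul_div_assoc _ _ _)

theorem norm_linearODESol_le {K : ℝ≥0} (hBK : ∀ t, ‖B t‖ ≤ K) (t : ℝ) :
    ‖linearODESol B x₀ t‖ ≤ ‖x₀‖ * Real.exp (K * |t|) := by
  have hexp : HasSum (fun n => ‖x₀‖ * ((K * |t|) ^ n / n.factorial))
      (‖x₀‖ * Real.exp (K * |t|)) := by
    have h := NormedSpace.expSeries_div_hasSum_exp ((K : ℝ) * |t|)
    rw [← Real.exp_eq_exp_ℝ] at h
    exact h.mul_left ‖x₀‖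
  refine (norm_tsum_le_tsum_norm (summable_norm_picardIterate x₀ hBK t)).trans ?_
  refine ((summable_norm_picardIterate x₀ hBK t).tsum_le_tsum (fun n => ?_)
    hexp.summable).trans_eq hexp.tsum_eq
  exact (norm_picardIterate_le x₀ hBK n t).trans_eq (mul_div_assoc _ _ _)

variable [CompleteSpace X]

theorem hasDerivAt_picardIterate_succ (hB : Continuous B) (n : ℕ) (t : ℝ) :
    HasDerivAt (picardIterate B x₀ (n + 1)) (B t (picardIterate B x₀ n t)) t :=
  have h := hB.clm_apply (continuous_picardIterate x₀ hB n)
  intervalIntegral.integral_hasDerivAt_right (h.intervalIntegrable _ _)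
    (h.stronglyMeasurableAtFilter _ _) h.continuousAt

theorem hasDerivAt_linearODESol (hB : Continuous B) {K : ℝ≥0} (hBK : ∀ t, ‖B t‖ ≤ K) (t : ℝ) :
    HasDerivAt (linearODESol B x₀) (B t (linearODESol B x₀ t)) t := by
  have hsum := fun t => (summable_norm_picardIterate x₀ hBK t).of_norm
  have hsplit : linearODESol B x₀ = fun t => x₀ + ∑' n, picardIterate B x₀ (n + 1) t :=
    funext fun t => (hsum t).tsum_eq_zero_add
  set T := |t| + 1
  have hbound : ∀ n, ∀ s ∈ Ioo (-T) T,
      ‖B s (picardIterate B x₀ n s)‖ ≤ K * (‖x₀‖ * (K * T) ^ n / n.factorial) := by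
    intro n s hs
    have hsT : |s| ≤ T := abs_le.2 ⟨hs.1.le, hs.2.le⟩
    refine ((B s).le_opNorm _).trans (mul_le_mul (hBK s)
      ((norm_picardIterate_le x₀ hBK n s).trans ?_) (norm_nonneg _) K.2)
    gcongr
  have hderiv := hasDerivAt_tsum_of_isPreconnected
    (((Real.summable_pow_div_factorial (K * T)).mul_left ‖x₀‖).mul_left (K : ℝ)
      |>.congr fun n => by rw [mul_div_assoc]) isOpen_Ioo isPreconnected_Ioo
    (fun n s _ => hasDerivAt_picardIterate_succ x₀ hB n s) hbound
    (y₀ := t) (y := t) (by constructor <;> linarith [neg_abs_le t, le_abs_self t])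
    ((summable_nat_add_iff 1).2 (hsum t))
    (by constructor <;> linarith [neg_abs_le t, le_abs_self t])
  have hval : B t (linearODESol B x₀ t) = ∑' n, B t (picardIterate B x₀ n t) :=
    (B t).map_tsum (hsum t)
  rw [hval, hsplit]
  exact hderiv.const_add x₀

end LinearODE

section Flow

variable {E : Type*} [NormedAddCommGroup E] [NormedSpace ℝ E]

structure IsCompleteFlow (F : E → E) (ψ : ℝ → E → E) : Prop where
  zero : ∀ z, ψ 0 z = z
  hasDerivAt : ∀ t z, HasDerivAt (fun t => ψ t z) (F (ψ t z)) t

def flowDeriv (F : E → E) (ψ : ℝ → E → E) (z : E) : ℝ → E →L[ℝ] E :=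
  linearODESol (fun t => ContinuousLinearMap.compL ℝ E E E (fderiv ℝ F (ψ t z)))
    (ContinuousLinearMap.id ℝ E)

variable {F : E → E} {ψ : ℝ → E → E} {K : ℝ≥0}

theorem flowDeriv_zero (z : E) : flowDeriv F ψ z 0 = ContinuousLinearMap.id ℝ E :=
  linearODESol_zero _

theorem norm_compL_le_of_norm_le {A : E →L[ℝ] E} {c : ℝ} (hA : ‖A‖ ≤ c) :
    ‖ContinuousLinearMap.compL ℝ E E E A‖ ≤ c :=
  ((ContinuousLinearMap.compL ℝ E E E).le_opNorm A).trans <| by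
    simpa using mul_le_mul (ContinuousLinearMap.norm_compL_le ℝ E E E) hA (norm_nonneg _)
      zero_le_one

namespace IsCompleteFlow

theorem reverse (hψ : IsCompleteFlow F ψ) : IsCompleteFlow (-F) fun t => ψ (-t) where
  zero z := by simpa using hψ.zero z
  hasDerivAt t z := by
    simpa [Function.comp_def] using (hψ.hasDerivAt (-t) z).scomp t (hasDerivAt_neg t)

theorem continuous_left (hψ : IsCompleteFlow F ψ) (z : E) : Continuous fun t => ψ t z :=
  continuous_iff_continuousAt.2 fun t => (hψ.hasDerivAt t z).continuousAt

theorem dist_le (hψ : IsCompleteFlow F ψ) (hF : LipschitzWith K F) {t : ℝ} (ht : 0 ≤ t)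
    (z z' : E) : dist (ψ t z) (ψ t z') ≤ dist z z' * Real.exp (K * t) := by
  simpa [hψ.zero] using dist_le_of_trajectories_ODE (v := fun _ => F) (fun _ => hF)
    (hψ.continuous_left z).continuousOn (fun s _ => (hψ.hasDerivAt s z).hasDerivWithinAt)
    (hψ.continuous_left z').continuousOn (fun s _ => (hψ.hasDerivAt s z').hasDerivWithinAt)
    le_rfl t ⟨ht, le_rfl⟩

theorem continuous_compL_fderiv (hψ : IsCompleteFlow F ψ) (hF : ContDiff ℝ 1 F) (z : E) :
    Continuous fun t => ContinuousLinearMap.compL ℝ E E E (fderiv ℝ F (ψ t z)) :=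
  (ContinuousLinearMap.compL ℝ E E E).continuous.comp
    ((hF.continuous_fderiv one_ne_zero).comp (hψ.continuous_left z))

theorem norm_flowDeriv_le (hFK : ∀ x, ‖fderiv ℝ F x‖ ≤ K) (z : E) (t : ℝ) :
    ‖flowDeriv F ψ z t‖ ≤ Real.exp (K * |t|) :=
  (norm_linearODESol_le _ (fun _ => norm_compL_le_of_norm_le (hFK _)) t).trans <|
    mul_le_of_le_one_left (Real.exp_pos _).le ContinuousLinearMap.norm_id_le

theorem eventually_norm_fderiv_sub_le (hψ : IsCompleteFlow F ψ) (hF : ContDiff ℝ 1 F)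
    (hFK : ∀ x, ‖fderiv ℝ F x‖ ≤ K) (z : E) (T : ℝ) {ε : ℝ} (hε : 0 < ε) :
    ∀ᶠ z' in 𝓝 z, ∀ s ∈ Icc 0 T, ∀ x, dist x (ψ s z) ≤ dist (ψ s z') (ψ s z) →
      ‖fderiv ℝ F x - fderiv ℝ F (ψ s z)‖ ≤ ε := by
  obtain ⟨δ, hδ, hδε⟩ := ((isCompact_Icc (a := 0) (b := T)).image (hψ.continuous_left z))
    |>.exists_pos_forall_dist_lt (hF.continuous_fderiv one_ne_zero) hε
  have hlip := lipschitzWith_of_forall_norm_fderiv_le (hF.differentiable one_ne_zero) hFK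
  have hρ : 0 < δ * Real.exp (-(K * T)) := by positivity
  filter_upwards [ball_mem_nhds z hρ] with z' hz' s hs x hx
  have hclose : dist (ψ s z') (ψ s z) < δ := calc
    dist (ψ s z') (ψ s z) ≤ dist z' z * Real.exp (K * s) := hψ.dist_le hlip hs.1 _ _
    _ ≤ dist z' z * Real.exp (K * T) := by gcongr; exact hs.2
    _ < δ * Real.exp (-(K * T)) * Real.exp (K * T) := by gcongr; exact hz'
    _ = δ := by rw [mul_assoc, ← Real.exp_add, neg_add_cancel, Real.exp_zero, mul_one]
  rw [← dist_eq_norm, dist_comm]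
  exact (hδε _ ⟨s, hs, rfl⟩ x (by rw [dist_comm]; exact hx.trans_lt hclose)).le

variable [CompleteSpace E]

theorem hasDerivAt_flowDeriv (hψ : IsCompleteFlow F ψ) (hF : ContDiff ℝ 1 F)
    (hFK : ∀ x, ‖fderiv ℝ F x‖ ≤ K) (z : E) (t : ℝ) :
    HasDerivAt (flowDeriv F ψ z) ((fderiv ℝ F (ψ t z)).comp (flowDeriv F ψ z t)) t :=
  hasDerivAt_linearODESol _ (hψ.continuous_compL_fderiv hF z)
    (fun _ => norm_compL_le_of_norm_le (hFK _)) t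

theorem continuous_flowDeriv (hψ : IsCompleteFlow F ψ) (hF : ContDiff ℝ 1 F)
    (hFK : ∀ x, ‖fderiv ℝ F x‖ ≤ K) (z : E) : Continuous (flowDeriv F ψ z) :=
  continuous_iff_continuousAt.2 fun t => (hψ.hasDerivAt_flowDeriv hF hFK z t).continuousAt

theorem norm_sub_sub_flowDeriv_le (hψ : IsCompleteFlow F ψ) (hF : ContDiff ℝ 1 F)
    (hFK : ∀ x, ‖fderiv ℝ F x‖ ≤ K) {z z' : E} {T ε : ℝ} (hT : 0 ≤ T)
    (hε : ∀ s ∈ Icc 0 T, ∀ x, dist x (ψ s z) ≤ dist (ψ s z') (ψ s z) →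
      ‖fderiv ℝ F x - fderiv ℝ F (ψ s z)‖ ≤ ε) :
    ‖ψ T z' - ψ T z - flowDeriv F ψ z T (z' - z)‖ ≤
      ε * (Real.exp (K * T) * gronwallBound 0 K 1 T) * ‖z' - z‖ := by
  set W := flowDeriv F ψ z
  set DF := fderiv ℝ F
  have hlip := lipschitzWith_of_forall_norm_fderiv_le (hF.differentiable one_ne_zero) hFK
  have hu : ∀ s, HasDerivAt (fun s => ψ s z' - ψ s z - W s (z' - z))
      (F (ψ s z') - F (ψ s z) - DF (ψ s z) (W s (z' - z))) s := fun s => by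
    have hW : HasDerivAt (fun s => W s (z' - z)) (DF (ψ s z) (W s (z' - z))) s := by
      simpa using (hψ.hasDerivAt_flowDeriv hF hFK z s).clm_apply (hasDerivAt_const s (z' - z))
    exact ((hψ.hasDerivAt s z').sub (hψ.hasDerivAt s z)).sub hW
  have hbound : ∀ s ∈ Ico 0 T, ‖F (ψ s z') - F (ψ s z) - DF (ψ s z) (W s (z' - z))‖ ≤
      K * ‖ψ s z' - ψ s z - W s (z' - z)‖ + ε * (Real.exp (K * T) * ‖z' - z‖) := by
    intro s hs
    have hflow : ‖ψ s z' - ψ s z‖ ≤ Real.exp (K * T) * ‖z' - z‖ := by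
      rw [← dist_eq_norm, ← dist_eq_norm, mul_comm]
      refine (hψ.dist_le hlip hs.1 _ _).trans ?_
      gcongr; exact hs.2.le
    have hMVT := norm_sub_sub_fderiv_le_of_forall_dist_le (hF.differentiable one_ne_zero)
      (hε s (Ico_subset_Icc_self hs))
    have hε0 : 0 ≤ ε := (norm_nonneg _).trans (hε s (Ico_subset_Icc_self hs) (ψ s z) (by simp))
    calc ‖F (ψ s z') - F (ψ s z) - DF (ψ s z) (W s (z' - z))‖
        = ‖(F (ψ s z') - F (ψ s z) - DF (ψ s z) (ψ s z' - ψ s z)) +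
            DF (ψ s z) (ψ s z' - ψ s z - W s (z' - z))‖ := by
          rw [map_sub (DF (ψ s z)) (ψ s z' - ψ s z)]; abel_nf
      _ ≤ ε * ‖ψ s z' - ψ s z‖ + K * ‖ψ s z' - ψ s z - W s (z' - z)‖ :=
          norm_add_le_of_le hMVT (((DF _).le_opNorm _).trans
            (mul_le_mul_of_nonneg_right (hFK _) (norm_nonneg _)))
      _ ≤ K * ‖ψ s z' - ψ s z - W s (z' - z)‖ + ε * (Real.exp (K * T) * ‖z' - z‖) := by
          rw [add_comm]; gcongr
  have h := norm_le_gronwallBound_of_norm_deriv_right_le (δ := 0)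
    (fun s _ => (hu s).continuousAt.continuousWithinAt) (fun s _ => (hu s).hasDerivWithinAt)
    (by simp [hψ.zero, W, flowDeriv_zero]) hbound T ⟨hT, le_rfl⟩
  rw [sub_zero, gronwallBound_zero_eq_mul] at h
  exact h.trans_eq (by ring)

theorem dist_flowDeriv_le (hψ : IsCompleteFlow F ψ) (hF : ContDiff ℝ 1 F)
    (hFK : ∀ x, ‖fderiv ℝ F x‖ ≤ K) {z z' : E} {T ε : ℝ} (hT : 0 ≤ T)
    (hε : ∀ s ∈ Icc 0 T, ‖fderiv ℝ F (ψ s z') - fderiv ℝ F (ψ s z)‖ ≤ ε) :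
    dist (flowDeriv F ψ z' T) (flowDeriv F ψ z T) ≤
      ε * (Real.exp (K * T) * gronwallBound 0 K 1 T) := by
  have hlip : ∀ s, LipschitzWith K (ContinuousLinearMap.compL ℝ E E E (fderiv ℝ F (ψ s z))) :=
    fun s => ((ContinuousLinearMap.compL ℝ E E E _).lipschitz).weaken
      (by exact_mod_cast norm_compL_le_of_norm_le (hFK _))
  have h := dist_le_of_approx_trajectories_ODE (δ := 0) (εg := 0)
    (εf := ε * Real.exp (K * T)) hlip
    (hψ.continuous_flowDeriv hF hFK z').continuousOn
    (fun s _ => (hψ.hasDerivAt_flowDeriv hF hFK z' s).hasDerivWithinAt)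
    (fun s hs => ?_)
    (hψ.continuous_flowDeriv hF hFK z).continuousOn
    (fun s _ => (hψ.hasDerivAt_flowDeriv hF hFK z s).hasDerivWithinAt)
    (fun _ _ => by simp) (by simp [flowDeriv_zero]) T ⟨hT, le_rfl⟩
  · rw [sub_zero, add_zero, gronwallBound_zero_eq_mul] at h
    exact h.trans_eq (by ring)
  · rw [dist_eq_norm, ContinuousLinearMap.compL_apply, ← ContinuousLinearMap.sub_comp]
    refine (ContinuousLinearMap.opNorm_comp_le _ _).trans (mul_le_mul
      (hε s (Ico_subset_Icc_self hs)) ((norm_flowDeriv_le hFK z' s).trans ?_)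
      (norm_nonneg _) ((norm_nonneg _).trans (hε s (Ico_subset_Icc_self hs))))
    rw [abs_of_nonneg hs.1]
    gcongr
    exact hs.2.le

theorem hasFDerivAt (hψ : IsCompleteFlow F ψ) (hF : ContDiff ℝ 1 F)
    (hFK : ∀ x, ‖fderiv ℝ F x‖ ≤ K) (z : E) {T : ℝ} (hT : 0 ≤ T) :
    HasFDerivAt (ψ T) (flowDeriv F ψ z T) z := by
  refine hasFDerivAt_iff_isLittleO.2 <|
    Asymptotics.isLittleO_of_forall_eventually_le_mul
    (Real.exp (K * T) * gronwallBound 0 K 1 T) fun ε hε => ?_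
  filter_upwards [hψ.eventually_norm_fderiv_sub_le hF hFK z T hε] with z' hz'
  exact hψ.norm_sub_sub_flowDeriv_le hF hFK hT hz'

theorem continuousAt_flowDeriv (hψ : IsCompleteFlow F ψ) (hF : ContDiff ℝ 1 F)
    (hFK : ∀ x, ‖fderiv ℝ F x‖ ≤ K) (z : E) {T : ℝ} (hT : 0 ≤ T) :
    ContinuousAt (fun y => flowDeriv F ψ y T) z := by
  rw [ContinuousAt, ← tendsto_sub_nhds_zero_iff, ← Asymptotics.isLittleO_one_iff ℝ]
  refine Asymptotics.isLittleO_of_forall_eventually_le_mul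
    (Real.exp (K * T) * gronwallBound 0 K 1 T) fun ε hε => ?_
  filter_upwards [hψ.eventually_norm_fderiv_sub_le hF hFK z T hε] with z' hz'
  simpa [← dist_eq_norm] using hψ.dist_flowDeriv_le hF hFK hT fun s hs => hz' s hs _ le_rfl

end IsCompleteFlow

end Flow

theorem IsCompleteFlow.contDiff_integral_Iic_smul {E G : Type*} [NormedAddCommGroup E]
    [NormedSpace ℝ E] [CompleteSpace E] [NormedAddCommGroup G] [NormedSpace ℝ G]
    {f : E → E} {φ : ℝ → E → E} {K : ℝ≥0} (hφ : IsCompleteFlow f φ) (hf : ContDiff ℝ 1 f)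
    (hfK : ∀ x, ‖fderiv ℝ f x‖ ≤ K) {q : E → ℝ} (hq : ContDiff ℝ 1 q) {C' : ℝ}
    (hqC' : ∀ x, ‖fderiv ℝ q x‖ ≤ C') {w : ℝ → G} (hw : Continuous w) {C a : ℝ} (ha : K < a)
    (hwC : ∀ s ≤ 0, ‖w s‖ ≤ C * Real.exp (a * s))
    (hint : ∀ z, IntegrableOn (fun s => q (φ s z) • w s) (Iic 0)) :
    ContDiff ℝ 1 fun z => ∫ s in Iic 0, q (φ s z) • w s := by
  have hψ := hφ.reverse
  have hfK' : ∀ x, ‖fderiv ℝ (-f) x‖ ≤ K := fun x => by rw [fderiv_neg, norm_neg]; exact hfK x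
  set D : E → ℝ → E →L[ℝ] E := fun z s => flowDeriv (-f) (fun t => φ (-t)) z (-s)
  have hD : ∀ z, ∀ s ≤ 0, HasFDerivAt (φ s) (D z s) z := fun z s hs => by
    simpa using hψ.hasFDerivAt hf.neg hfK' z (neg_nonneg.2 hs)
  have hDq : Continuous (fderiv ℝ q) := hq.continuous_fderiv one_ne_zero
  refine contDiff_one_integral_of_dominated
    (F' := fun z s => ((fderiv ℝ q (φ s z)).comp (D z s)).smulRight (w s))
    (bound := fun s => C' * C * Real.exp ((a - K) * s)) hint (fun z => ?_) ?_
    ((integrableOn_exp_mul_Iic (sub_pos.2 ha) 0).const_mul (C' * C)) ?_ ?_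
  · have hDz : Continuous (D z) := (hψ.continuous_flowDeriv hf.neg hfK' z).comp continuous_neg
    have hDqz := hDq.comp (hφ.continuous_left z)
    exact (by fun_prop : Continuous fun s => ((fderiv ℝ q (φ s z)).comp (D z s)).smulRight (w s))
      |>.aestronglyMeasurable
  · refine (ae_restrict_iff' measurableSet_Iic).2 (.of_forall fun s (hs : s ≤ 0) z => ?_)
    have hDzs : ‖D z s‖ ≤ Real.exp (K * -s) := by
      simpa [abs_of_nonpos hs] using norm_flowDeriv_le hfK' z (-s)
    have hC' : 0 ≤ C' := (norm_nonneg _).trans (hqC' 0)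
    calc _ ≤ ‖fderiv ℝ q (φ s z)‖ * ‖D z s‖ * ‖w s‖ := by
          rw [ContinuousLinearMap.norm_smulRight_apply]
          gcongr; exact ContinuousLinearMap.opNorm_comp_le _ _
      _ ≤ C' * Real.exp (K * -s) * (C * Real.exp (a * s)) := by gcongr; exacts [hqC' _, hwC s hs]
      _ = C' * C * Real.exp ((a - K) * s) := by rw [mul_mul_mul_comm, ← Real.exp_add]; ring_nf
  · refine (ae_restrict_iff' measurableSet_Iic).2 (.of_forall fun s (hs : s ≤ 0) z => ?_)
    exact ((hq.differentiable one_ne_zero _).hasFDerivAt.comp z (hD z s hs)).smul_const (w s)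
  · refine (ae_restrict_iff' measurableSet_Iic).2 (.of_forall fun s (hs : s ≤ 0) => ?_)
    refine continuous_iff_continuousAt.2 fun z => ?_
    have hDs : ContinuousAt (D · s) z :=
      hψ.continuousAt_flowDeriv hf.neg hfK' z (neg_nonneg.2 hs)
    have hDqs := (hDq.continuousAt (x := φ s z)).comp (hD z s hs).continuousAt
    exact ((ContinuousLinearMap.smulRightL ℝ E G).flip (w s)).continuous.continuousAt.comp
      (hDqs.clm_comp hDs)

theorem statement_12_general
    (n : ℕ) (f : (Fin n → ℝ) → (Fin n → ℝ)) (l : ℝ)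
    (hf : ContDiff ℝ 1 f)
    (hfd : ∀ z, ‖fderiv ℝ f z‖ ≤ l)
    (φ : ℝ → (Fin n → ℝ) → (Fin n → ℝ))
    (hφ0 : ∀ z, φ 0 z = z)
    (hφ : ∀ s z, HasDerivAt (fun t => φ t z) (f (φ s z)) s)
    (q : (Fin n → ℝ) → ℝ) (hq : ContDiff ℝ 1 q)
    (hqb : ∃ C : ℝ, ∀ z, |q z| ≤ C) (hqd : ∃ C : ℝ, ∀ z, ‖fderiv ℝ q z‖ ≤ C)
    (g : ℝ)
    (lam : ℂ) (hlam : lam.re < -l) :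
    (∀ z, IntegrableOn
      (fun s : ℝ => Complex.exp (-(lam * s)) * ((g : ℂ) * (q (φ s z) : ℂ))) (Iic 0)) ∧
    ContDiff ℝ 1 (fun z =>
      ∫ s in Iic (0:ℝ), Complex.exp (-(lam * s)) * ((g : ℂ) * (q (φ s z) : ℂ))) := by
  obtain ⟨Cq, hCq⟩ := hqb
  obtain ⟨Cq', hCq'⟩ := hqd
  lift l to ℝ≥0 using (norm_nonneg _).trans (hfd 0)
  have hflow : IsCompleteFlow f φ := ⟨hφ0, hφ⟩
  set w : ℝ → ℂ := fun s => Complex.exp (-(lam * s)) * g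
  have hw : Continuous w := by fun_prop
  have hwC : ∀ s ≤ 0, ‖w s‖ ≤ |g| * Real.exp (-lam.re * s) := fun s _ => by
    simp [w, Complex.norm_exp, mul_comm]
  have hform : ∀ (s : ℝ) z,
      Complex.exp (-(lam * s)) * ((g : ℂ) * (q (φ s z) : ℂ)) = q (φ s z) • w s := fun s z => by
    rw [Complex.real_smul]; ring
  simp_rw [hform]
  have hint : ∀ z, IntegrableOn (fun s => q (φ s z) • w s) (Iic 0) := fun z =>
    integrableOn_Iic_of_norm_le_mul_exp (C := Cq * |g|) (a := -lam.re)
      ((hq.continuous.comp (hflow.continuous_left z)).smul hw) (by linarith [l.coe_nonneg])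
      fun s hs => by
        rw [norm_smul, mul_assoc]
        exact mul_le_mul (hCq _) (hwC s hs) (norm_nonneg _) ((abs_nonneg _).trans (hCq 0))
  exact ⟨hint, hflow.contDiff_integral_Iic_smul hf hfd hq hCq' hw (by linarith) hwC hint⟩

/-- Proposition 4: for `Re λ < -ℓ`, the map
`τ_λ(z) = ∫_{-∞}^0 e^{-λs} g q(φ(s,z)) ds` is well defined (absolutely convergent Bochner
integral) and `C¹` on `ℝⁿ`. -/
theorem statement_12
    (n : ℕ) (f : (Fin n → ℝ) → (Fin n → ℝ)) (l : ℝ)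
    (hf : ContDiff ℝ 1 f) (hfb : ∃ C : ℝ, ∀ z, ‖f z‖ ≤ C)
    (hfd : ∀ z, ‖fderiv ℝ f z‖ ≤ l)
    (φ : ℝ → (Fin n → ℝ) → (Fin n → ℝ))
    (hφ0 : ∀ z, φ 0 z = z)
    (hφ : ∀ s z, HasDerivAt (fun t => φ t z) (f (φ s z)) s)
    (q : (Fin n → ℝ) → ℝ) (hq : ContDiff ℝ 1 q)
    (hqb : ∃ C : ℝ, ∀ z, |q z| ≤ C) (hqd : ∃ C : ℝ, ∀ z, ‖fderiv ℝ q z‖ ≤ C)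
    (g : ℝ) (hg : g ≠ 0)
    (lam : ℂ) (hlam : lam.re < -l) :
    (∀ z, IntegrableOn
      (fun s : ℝ => Complex.exp (-(lam * s)) * ((g : ℂ) * (q (φ s z) : ℂ))) (Iic 0)) ∧
    ContDiff ℝ 1 (fun z =>
      ∫ s in Iic (0:ℝ), Complex.exp (-(lam * s)) * ((g : ℂ) * (q (φ s z) : ℂ))) :=
  statement_12_general n f l hf hfd φ hφ0 hφ q hq hqb hqd g lam hlam
end
end

section
/- Let F ∈ ℝ^{m×m} satisfy ‖exp(tF)‖ ≤ c e^{−λt} for all t ≥ 0, for some c ≥ 1 and λ > 0, and let u : ℝ → ℝ^m be continuous and bounded. Then the function x̄(t) = ∫_{−∞}^t exp((t−s)F) u(s) ds is well defined, bounded, differentiable, and satisfies x̄'(t) = F x̄(t) + u(t) for all t ∈ ℝ; moreover it is the unique such function: every differentiable x : ℝ → ℝ^m with sup_{t∈ℝ} |x(t)| < ∞ and x'(t) = F x(t) + u(t) for all t ∈ ℝ coincides with x̄. -/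
open Set Filter Topology Metric MeasureTheory

noncomputable section

/-!
On the space of bounded solutions, `ẋ = A x + u` has exactly one candidate: the difference of two
bounded solutions solves `ẏ = A y`, so `y t = exp ((t - s) A) y s` for every `s`, and letting
`s → -∞` the exponential decay of `exp (t A)` forces `y t = 0`. Existence comes from the Duhamel
integral `x̄ t = ∫_{-∞}^t exp ((t - s) A) u s`, which converges because the integrand is dominated
by `c C e^{-λ (t - s)}`. To differentiate it, write it for `t` near a base point `τ` as
`exp ((t - τ) A) (x̄ τ + ∫_τ^t exp ((τ - s) A) u s)`, a product of two differentiable factors.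
-/

open NormedSpace

theorem exp_add_smul {𝔸 : Type*} [NormedRing 𝔸] [NormedAlgebra ℝ 𝔸] [CompleteSpace 𝔸]
    (A : 𝔸) (a b : ℝ) : exp ((a + b) • A) = exp (a • A) * exp (b • A) := by
  have hball (x : 𝔸) : x ∈ eball 0 (expSeries ℝ 𝔸).radius :=
    (expSeries_radius_eq_top ℝ 𝔸).symm ▸ edist_lt_top _ _
  rw [add_smul, exp_add_of_commute_of_mem_ball (((Commute.refl A).smul_left a).smul_right b)
    (hball _) (hball _)]

theorem exp_neg_mul_sub_eq_mul_exp {lam t s : ℝ} :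
    Real.exp (-lam * (t - s)) = Real.exp (-lam * t) * Real.exp (lam * s) := by
  rw [← Real.exp_add]; ring_nf

theorem integrableOn_Iic_exp_neg_mul_sub {lam : ℝ} (hlam : 0 < lam) (t : ℝ) :
    IntegrableOn (fun s => Real.exp (-lam * (t - s))) (Iic t) := by
  simp only [exp_neg_mul_sub_eq_mul_exp]
  exact (integrableOn_exp_mul_Iic hlam t).const_mul _

theorem integral_Iic_exp_neg_mul_sub {lam : ℝ} (hlam : 0 < lam) (t : ℝ) :
    ∫ s in Iic t, Real.exp (-lam * (t - s)) = lam⁻¹ := by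
  simp only [exp_neg_mul_sub_eq_mul_exp]
  rw [integral_const_mul, integral_exp_mul_Iic hlam, mul_div_assoc', ← Real.exp_add]
  simp [div_eq_inv_mul]

section Banach

variable {E : Type*} [NormedAddCommGroup E] [NormedSpace ℝ E]

def HasExpDecay (A : E →L[ℝ] E) (c lam : ℝ) : Prop :=
  ∀ t, 0 ≤ t → ∀ x, ‖exp (t • A) x‖ ≤ c * Real.exp (-lam * t) * ‖x‖

def duhamel (A : E →L[ℝ] E) (u : ℝ → E) (t : ℝ) : E :=
  ∫ s in Iic t, exp ((t - s) • A) (u s)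

variable {A : E →L[ℝ] E} {c lam C : ℝ} {u : ℝ → E}

theorem HasExpDecay.norm_apply_le (hA : HasExpDecay A c lam) (hc : 0 ≤ c) {t : ℝ} (ht : 0 ≤ t)
    {x : E} (hx : ‖x‖ ≤ C) : ‖exp (t • A) x‖ ≤ c * C * Real.exp (-lam * t) :=
  calc ‖exp (t • A) x‖ ≤ c * Real.exp (-lam * t) * ‖x‖ := hA t ht x
    _ ≤ c * Real.exp (-lam * t) * C := by gcongr
    _ = c * C * Real.exp (-lam * t) := by ring

theorem HasExpDecay.ae_norm_exp_sub_smul_apply_le (hA : HasExpDecay A c lam) (hc : 0 ≤ c)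
    (hub : ∀ s, ‖u s‖ ≤ C) (t : ℝ) :
    ∀ᵐ s ∂volume.restrict (Iic t), ‖exp ((t - s) • A) (u s)‖ ≤ c * C * Real.exp (-lam * (t - s)) :=
  (ae_restrict_mem measurableSet_Iic).mono fun s hs =>
    hA.norm_apply_le hc (sub_nonneg.2 hs) (hub s)

theorem HasExpDecay.norm_duhamel_le (hA : HasExpDecay A c lam) (hc : 0 ≤ c) (hlam : 0 < lam)
    (hub : ∀ s, ‖u s‖ ≤ C) (t : ℝ) : ‖duhamel A u t‖ ≤ c * C / lam :=
  calc ‖duhamel A u t‖ ≤ ∫ s in Iic t, c * C * Real.exp (-lam * (t - s)) :=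
        norm_integral_le_of_norm_le ((integrableOn_Iic_exp_neg_mul_sub hlam t).const_mul (c * C))
          (hA.ae_norm_exp_sub_smul_apply_le hc hub t)
    _ = c * C / lam := by
        rw [integral_const_mul, integral_Iic_exp_neg_mul_sub hlam t, div_eq_mul_inv]

variable [CompleteSpace E]

theorem continuous_exp_sub_smul_apply (A : E →L[ℝ] E) (hu : Continuous u) (t : ℝ) :
    Continuous fun s => exp ((t - s) • A) (u s) :=
  ((differentiable_exp_smul_const ℝ A).continuous.comp
    (continuous_const.sub continuous_id)).clm_apply hu

theorem HasExpDecay.integrableOn_duhamel (hA : HasExpDecay A c lam) (hc : 0 ≤ c) (hlam : 0 < lam)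
    (hu : Continuous u) (hub : ∀ s, ‖u s‖ ≤ C) (t : ℝ) :
    IntegrableOn (fun s => exp ((t - s) • A) (u s)) (Iic t) :=
  Integrable.mono' ((integrableOn_Iic_exp_neg_mul_sub hlam t).const_mul (c * C))
    (continuous_exp_sub_smul_apply A hu t).aestronglyMeasurable
    (hA.ae_norm_exp_sub_smul_apply_le hc hub t)

theorem HasExpDecay.duhamel_eq_exp_smul_apply (hA : HasExpDecay A c lam) (hc : 0 ≤ c)
    (hlam : 0 < lam) (hu : Continuous u) (hub : ∀ s, ‖u s‖ ≤ C) (τ t : ℝ) :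
    duhamel A u t =
      exp ((t - τ) • A) (duhamel A u τ + ∫ s in τ..t, exp ((τ - s) • A) (u s)) := by
  have hflow (s : ℝ) : exp ((t - s) • A) (u s) = exp ((t - τ) • A) (exp ((τ - s) • A) (u s)) := by
    rw [← mul_apply_eq_comp, ← exp_add_smul A (t - τ) (τ - s), sub_add_sub_cancel]
  set L := exp ((t - τ) • A)
  have hIτ := hA.integrableOn_duhamel hc hlam hu hub τ
  have hIτ' : IntegrableOn (fun s => exp ((t - s) • A) (u s)) (Iic τ) := by
    simp only [hflow]
    exact L.integrable_comp hIτ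
  rw [duhamel, duhamel, ← sub_add_cancel (∫ s in Iic t, _) (∫ s in Iic τ, _),
    intervalIntegral.integral_Iic_sub_Iic hIτ' (hA.integrableOn_duhamel hc hlam hu hub t),
    map_add, add_comm]
  simp only [hflow]
  rw [L.integral_comp_comm hIτ,
    L.intervalIntegral_comp_comm ((continuous_exp_sub_smul_apply A hu τ).intervalIntegrable _ _)]

theorem HasExpDecay.hasDerivAt_duhamel (hA : HasExpDecay A c lam) (hc : 0 ≤ c) (hlam : 0 < lam)
    (hu : Continuous u) (hub : ∀ s, ‖u s‖ ≤ C) (τ : ℝ) :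
    HasDerivAt (duhamel A u) (A (duhamel A u τ) + u τ) τ := by
  have hexp : HasDerivAt (fun t => exp ((t - τ) • A)) A τ := by
    simpa using (hasDerivAt_exp_smul_const' A (τ - τ)).comp_sub_const τ τ
  have hcont := continuous_exp_sub_smul_apply A hu τ
  have hint : HasDerivAt (fun t => duhamel A u τ + ∫ s in τ..t, exp ((τ - s) • A) (u s))
      (u τ) τ := by
    simpa using (intervalIntegral.integral_hasDerivAt_right (hcont.intervalIntegrable τ τ)
      (hcont.stronglyMeasurableAtFilter _ (𝓝 τ)) hcont.continuousAt).const_add (duhamel A u τ)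
  rw [funext (hA.duhamel_eq_exp_smul_apply hc hlam hu hub τ)]
  simpa using hexp.clm_apply hint

theorem eq_exp_sub_smul_apply_of_hasDerivAt {y : ℝ → E} (hy : ∀ t, HasDerivAt y (A (y t)) t)
    (s t : ℝ) : y t = exp ((t - s) • A) (y s) := by
  have hz (r : ℝ) : HasDerivAt (fun r => exp ((t - r) • A) (y r)) 0 r := by
    convert ((hasDerivAt_exp_smul_const' A (t - r)).comp_const_sub t r).clm_apply (hy r) using 1
    have hcomm : exp ((t - r) • A) * A = A * exp ((t - r) • A) :=
      ((Commute.refl A).smul_left (t - r)).exp_left.eq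
    rw [← mul_apply_eq_comp (exp ((t - r) • A)) A, hcomm, neg_apply, neg_add_cancel]
  simpa using is_const_of_deriv_eq_zero (fun r => (hz r).differentiableAt)
    (fun r => (hz r).deriv) t s

theorem HasExpDecay.eq_zero_of_hasDerivAt (hA : HasExpDecay A c lam) (hc : 0 ≤ c)
    (hlam : 0 < lam) {y : ℝ → E} (hy : ∀ t, HasDerivAt y (A (y t)) t) {K : ℝ}
    (hyb : ∀ t, ‖y t‖ ≤ K) (t : ℝ) : y t = 0 := by
  have hdecay : Tendsto (fun s => c * K * Real.exp (-lam * (t - s))) atBot (𝓝 0) := by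
    have h : Tendsto (fun s => -lam * (t - s)) atBot atBot := by
      simpa [mul_sub, add_comm] using
        tendsto_atBot_add_const_right _ (-lam * t) (tendsto_id.const_mul_atBot hlam)
    simpa using (Real.tendsto_exp_atBot.comp h).const_mul (c * K)
  refine norm_le_zero_iff.1 (ge_of_tendsto hdecay ?_)
  filter_upwards [Iic_mem_atBot t] with s hs
  rw [eq_exp_sub_smul_apply_of_hasDerivAt hy s t]
  exact hA.norm_apply_le hc (sub_nonneg.2 hs) (hyb s)

theorem HasExpDecay.eq_duhamel_of_hasDerivAt (hA : HasExpDecay A c lam) (hc : 0 ≤ c)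
    (hlam : 0 < lam) (hu : Continuous u) (hub : ∀ s, ‖u s‖ ≤ C) {x : ℝ → E}
    (hx : ∀ t, HasDerivAt x (A (x t) + u t) t) {C' : ℝ} (hxb : ∀ t, ‖x t‖ ≤ C') (t : ℝ) :
    x t = duhamel A u t := by
  have hy (τ : ℝ) : HasDerivAt (x - duhamel A u) (A ((x - duhamel A u) τ)) τ := by
    simpa [map_sub] using (hx τ).sub (hA.hasDerivAt_duhamel hc hlam hu hub τ)
  have hyb (τ : ℝ) : ‖(x - duhamel A u) τ‖ ≤ C' + c * C / lam :=
    (norm_sub_le _ _).trans (add_le_add (hxb τ) (hA.norm_duhamel_le hc hlam hub τ))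
  exact sub_eq_zero.1 (hA.eq_zero_of_hasDerivAt hc hlam hy hyb t)

end Banach

section Matrix

variable {n : Type*} [Fintype n] [DecidableEq n]

def Matrix.toContinuousLinearMapAlgHom : Matrix n n ℝ →ₐ[ℝ] ((n → ℝ) →L[ℝ] (n → ℝ)) :=
  (Module.End.toContinuousLinearMap (n → ℝ)).toAlgHom.comp Matrix.toLinAlgEquiv'.toAlgHom

theorem Matrix.toContinuousLinearMapAlgHom_apply (M : Matrix n n ℝ) (x : n → ℝ) :
    toContinuousLinearMapAlgHom M x = M.mulVec x :=
  rfl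

-- `exp` depends only on the topology, so any normed-algebra structure on matrices serves here.
theorem Matrix.toContinuousLinearMapAlgHom_exp (M : Matrix n n ℝ) :
    toContinuousLinearMapAlgHom (exp M) = exp (toContinuousLinearMapAlgHom M) := by
  open scoped Matrix.Norms.Operator in
  exact map_exp _ toContinuousLinearMapAlgHom.toLinearMap.continuous_of_finiteDimensional M

end Matrix

/-- for an exponentially stable `F` and a bounded continuous input `u`,
`x̄(t) = ∫_{-∞}^t exp((t-s)F) u(s) ds` is the unique bounded global solution of
`ẋ = Fx + u(t)`. -/
theorem statement_15
    (m : ℕ) (F : Matrix (Fin m) (Fin m) ℝ) (c lam : ℝ) (hc : 1 ≤ c) (hlam : 0 < lam)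
    (hF : ∀ t : ℝ, 0 ≤ t → ∀ x : Fin m → ℝ,
      ‖(NormedSpace.exp (t • F)).mulVec x‖ ≤ c * Real.exp (-lam * t) * ‖x‖)
    (u : ℝ → Fin m → ℝ) (hu : Continuous u) (hub : ∃ C : ℝ, ∀ t, ‖u t‖ ≤ C) :
    (∀ t : ℝ, IntegrableOn
      (fun s : ℝ => (NormedSpace.exp ((t - s) • F)).mulVec (u s)) (Iic t)) ∧
    (∃ C : ℝ, ∀ t : ℝ,
      ‖∫ s in Iic t, (NormedSpace.exp ((t - s) • F)).mulVec (u s)‖ ≤ C) ∧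
    (∀ t : ℝ, HasDerivAt
      (fun t' => ∫ s in Iic t', (NormedSpace.exp ((t' - s) • F)).mulVec (u s))
      (F.mulVec (∫ s in Iic t, (NormedSpace.exp ((t - s) • F)).mulVec (u s)) + u t) t) ∧
    (∀ x : ℝ → Fin m → ℝ,
      (∀ t : ℝ, HasDerivAt x (F.mulVec (x t) + u t) t) → (∃ C : ℝ, ∀ t, ‖x t‖ ≤ C) →
      ∀ t : ℝ, x t = ∫ s in Iic t, (NormedSpace.exp ((t - s) • F)).mulVec (u s)) := by
  obtain ⟨C, hub⟩ := hub
  simp only [← Matrix.toContinuousLinearMapAlgHom_apply, Matrix.toContinuousLinearMapAlgHom_exp,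
    map_smul] at hF ⊢
  have hA : HasExpDecay (Matrix.toContinuousLinearMapAlgHom F) c lam := hF
  have hc₀ : 0 ≤ c := zero_le_one.trans hc
  exact ⟨hA.integrableOn_duhamel hc₀ hlam hu hub, ⟨c * C / lam, hA.norm_duhamel_le hc₀ hlam hub⟩,
    hA.hasDerivAt_duhamel hc₀ hlam hu hub,
    fun x hx ⟨C', hxb⟩ => hA.eq_duhamel_of_hasDerivAt hc₀ hlam hu hub hx hxb⟩
end
end

section
/- Let g : (−∞, 0] → ℝ be continuous and bounded with g(0) ≠ 0, and let a < 0. Then there exists λ ∈ ℂ with Re λ < a such that ∫_{−∞}^0 e^{−λ s} g(s) ds ≠ 0; equivalently, the function λ ↦ ∫_{−∞}^0 e^{−λ s} g(s) ds (which converges absolutely for Re λ < 0) is not identically zero on the half-plane {λ ∈ ℂ : Re λ < a}. -/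
/-!
For real `λ = -R`, the kernel `R e^{R s}` on `(-∞, 0]` is an approximate identity concentrating
at `0`: substituting `s = u / R` and using dominated convergence (with dominating function
`C e^u`), `R ∫_{-∞}^0 e^{R s} g(s) ds = ∫_{-∞}^0 e^u g(u / R) du → g(0) ≠ 0` as `R → ∞`.
Hence the transform is nonzero at `λ = -R` for every large enough `R`.
-/

open Set Filter Topology Metric MeasureTheory

noncomputable section

section

variable {E : Type*} [NormedAddCommGroup E] [NormedSpace ℝ E]

theorem setIntegral_Iic_comp_mul_left (h : ℝ → E) (a : ℝ) {R : ℝ} (hR : 0 < R) :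
    ∫ s in Iic a, h (R * s) = R⁻¹ • ∫ u in Iic (R * a), h u := by
  simpa [LinearOrderedField.smul_Iic hR] using
    Measure.setIntegral_comp_smul_of_pos volume h (Iic a) hR

theorem tendsto_integral_exp_smul_comp_div_atTop [CompleteSpace E] {g : ℝ → E}
    (hg : ContinuousOn g (Iic 0)) {C : ℝ} (hC : ∀ s ≤ 0, ‖g s‖ ≤ C) :
    Tendsto (fun R => ∫ u in Iic 0, Real.exp u • g (u / R)) atTop (𝓝 (g 0)) := by
  have hdiv : ∀ᶠ R in atTop, ∀ u ≤ (0:ℝ), u / R ≤ 0 := by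
    filter_upwards [eventually_gt_atTop 0] with R hR u hu
    exact div_nonpos_of_nonpos_of_nonneg hu hR.le
  have hlim := tendsto_integral_filter_of_dominated_convergence (l := atTop)
    (μ := volume.restrict (Iic 0)) (fun u => Real.exp u * C)
    (F := fun R u => Real.exp u • g (u / R)) (f := fun u => Real.exp u • g 0)
    ?meas ?bound ?int ?pointwise
  · rwa [integral_smul_const, integral_exp_Iic_zero, one_smul] at hlim
  case meas =>
    filter_upwards [hdiv] with R hR
    exact (Real.continuous_exp.continuousOn.smul
      (hg.comp (continuous_id.div_const R).continuousOn hR)).aestronglyMeasurable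
      measurableSet_Iic
  case bound =>
    filter_upwards [hdiv] with R hR
    refine (ae_restrict_iff' measurableSet_Iic).2 (Eventually.of_forall fun u hu => ?_)
    rw [norm_smul, Real.norm_of_nonneg (Real.exp_pos u).le]
    exact mul_le_mul_of_nonneg_left (hC _ (hR u hu)) (Real.exp_pos u).le
  case int => exact (integrableOn_exp_Iic 0).mul_const C
  case pointwise =>
    refine (ae_restrict_iff' measurableSet_Iic).2 (Eventually.of_forall fun u hu => ?_)
    have hdiv_u : Tendsto (fun R : ℝ => u / R) atTop (𝓝[Iic 0] 0) :=
      tendsto_nhdsWithin_iff.2 ⟨tendsto_const_nhds.div_atTop tendsto_id,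
        hdiv.mono fun R hR => hR u hu⟩
    exact tendsto_const_nhds.smul ((hg 0 self_mem_Iic).tendsto.comp hdiv_u)

theorem tendsto_smul_integral_Iic_exp_mul_smul [CompleteSpace E] {g : ℝ → E}
    (hg : ContinuousOn g (Iic 0)) {C : ℝ} (hC : ∀ s ≤ 0, ‖g s‖ ≤ C) :
    Tendsto (fun R => R • ∫ s in Iic 0, Real.exp (R * s) • g s) atTop (𝓝 (g 0)) := by
  refine (tendsto_integral_exp_smul_comp_div_atTop hg hC).congr' ?_
  filter_upwards [eventually_gt_atTop 0] with R hR
  have hsubst := setIntegral_Iic_comp_mul_left (fun u => Real.exp u • g (u / R)) 0 hR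
  simp only [mul_div_cancel_left₀ _ hR.ne', mul_zero] at hsubst
  rw [hsubst, smul_inv_smul₀ hR.ne']

end

theorem statement_16_general
    (g : ℝ → ℝ) (hg : ContinuousOn g (Iic 0))
    (hgb : ∃ C : ℝ, ∀ s ≤ (0:ℝ), |g s| ≤ C)
    (hg0 : g 0 ≠ 0) (a : ℝ) :
    ∃ lam : ℂ, lam.re < a ∧
      (∫ s in Iic (0:ℝ), Complex.exp (-(lam * s)) * (g s : ℂ)) ≠ 0 := by
  obtain ⟨C, hC⟩ := hgb
  have hlim := tendsto_smul_integral_Iic_exp_mul_smul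
    (Complex.continuous_ofReal.comp_continuousOn hg) (C := C) (by simpa using hC)
  obtain ⟨R, hRne, haR⟩ :=
    ((hlim.eventually_ne (Complex.ofReal_ne_zero.2 hg0)).and (eventually_gt_atTop (-a))).exists
  refine ⟨-R, by simpa using neg_lt.1 haR, ?_⟩
  convert right_ne_zero_of_smul hRne using 2 with s
  simp [Complex.real_smul, Complex.ofReal_exp]

/-- for a bounded continuous `g : (-∞,0] → ℝ` with `g(0) ≠ 0` and `a < 0`, the
Laplace-type transform `λ ↦ ∫_{-∞}^0 e^{-λs} g(s) ds` is not identically zero on the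
half-plane `Re λ < a`. -/
theorem statement_16
    (g : ℝ → ℝ) (hg : ContinuousOn g (Iic 0))
    (hgb : ∃ C : ℝ, ∀ s ≤ (0:ℝ), |g s| ≤ C)
    (hg0 : g 0 ≠ 0) (a : ℝ) (ha : a < 0) :
    ∃ lam : ℂ, lam.re < a ∧
      (∫ s in Iic (0:ℝ), Complex.exp (-(lam * s)) * (g s : ℂ)) ≠ 0 :=
  statement_16_general g hg hgb hg0 a
end
end

section
/- Let A ⊂ ℝⁿ be compact and let τ : ℝⁿ → ℝ^m and q : ℝⁿ → ℝ be continuous maps such that for all z₁, z₂ ∈ A, τ(z₁) = τ(z₂) implies q(z₁) = q(z₂). Then there exists a class-K function ρ such that |q(z₁) − q(z₂)| ≤ ρ(‖τ(z₁) − τ(z₂)‖) for all z₁, z₂ ∈ A. -/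
open Set Filter Topology Metric MeasureTheory

noncomputable section

/-! The modulus of `q` relative to `τ` on `A`,
`g s = sup {|q z₁ - q z₂| : ‖τ z₁ - τ z₂‖ ≤ s}`. It is monotone, vanishes at `0` because `τ`
separates whatever `q` separates, and is continuous at `0` by compactness of `A`. Averaging it,
`ρ s = s + (1/s) ∫_s^{2s} g`, turns it into a continuous strictly increasing majorant. -/

section Majorant

/-- `s + ⨍_{[s, 2s]} g`, written after the substitution `t = s v` so that it makes sense at
`s = 0`. -/
def kMajorant (g : ℝ → ℝ) (s : ℝ) : ℝ :=
  s + ∫ v in (1 : ℝ)..2, g (s * v)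

variable {g : ℝ → ℝ}

lemma kMajorant_zero (hg0 : g 0 = 0) : kMajorant g 0 = 0 := by
  simp [kMajorant, hg0]

lemma integral_comp_mul_le_integral_comp_mul (hg : Monotone g) {s s' : ℝ} (hs : 0 ≤ s)
    (hss' : s ≤ s') : ∫ v in (1 : ℝ)..2, g (s * v) ≤ ∫ v in (1 : ℝ)..2, g (s' * v) :=
  intervalIntegral.integral_mono_on (by norm_num)
    (hg.comp (monotone_mul_left_of_nonneg hs)).intervalIntegrable
    (hg.comp (monotone_mul_left_of_nonneg (hs.trans hss'))).intervalIntegrable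
    fun _ hv => hg (mul_le_mul_of_nonneg_right hss' (by linarith [hv.1]))

lemma le_kMajorant (hg : Monotone g) {s : ℝ} (hs : 0 ≤ s) : g s ≤ kMajorant g s := by
  have : ∫ _ in (1 : ℝ)..2, g s ≤ ∫ v in (1 : ℝ)..2, g (s * v) :=
    intervalIntegral.integral_mono_on (by norm_num) intervalIntegrable_const
      (hg.comp (monotone_mul_left_of_nonneg hs)).intervalIntegrable
      fun v hv => hg (le_mul_of_one_le_right hs hv.1)
  norm_num at this
  unfold kMajorant
  linarith

lemma kMajorant_le (hg : Monotone g) {s : ℝ} (hs : 0 ≤ s) : kMajorant g s ≤ s + g (2 * s) := by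
  have : ∫ v in (1 : ℝ)..2, g (s * v) ≤ ∫ _ in (1 : ℝ)..2, g (2 * s) :=
    intervalIntegral.integral_mono_on (by norm_num)
      (hg.comp (monotone_mul_left_of_nonneg hs)).intervalIntegrable intervalIntegrable_const
      fun v hv => hg (by nlinarith [hv.2])
  norm_num at this
  unfold kMajorant
  linarith

lemma strictMonoOn_kMajorant (hg : Monotone g) : StrictMonoOn (kMajorant g) (Ici 0) :=
  fun _ hs _ _ hss' => add_lt_add_of_lt_of_le hss'
    (integral_comp_mul_le_integral_comp_mul hg hs hss'.le)

lemma kMajorant_eq_of_ne_zero (hg : Monotone g) {s : ℝ} (hs : s ≠ 0) :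
    kMajorant g s = s + s⁻¹ * ((∫ t in (0 : ℝ)..2 * s, g t) - ∫ t in (0 : ℝ)..s, g t) := by
  rw [kMajorant, intervalIntegral.integral_comp_mul_left g hs, smul_eq_mul, mul_one,
    mul_comm s 2, intervalIntegral.integral_interval_sub_left hg.intervalIntegrable
      hg.intervalIntegrable]

lemma continuousWithinAt_kMajorant_zero (hg : Monotone g) (hg0 : g 0 = 0)
    (hgc : ContinuousWithinAt g (Ici 0) 0) : ContinuousWithinAt (kMajorant g) (Ici 0) 0 := by
  have hupper : Tendsto (fun s => s + g (2 * s)) (𝓝[≥] 0) (𝓝 0) := by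
    have h2 : Tendsto (fun s : ℝ => 2 * s) (𝓝[≥] 0) (𝓝[≥] 0) :=
      tendsto_nhdsWithin_of_tendsto_nhds_of_eventually_within _
        (((continuous_const_mul (2 : ℝ)).tendsto' 0 0 (mul_zero 2)).mono_left nhdsWithin_le_nhds)
        (eventually_nhdsWithin_of_forall fun s (hs : 0 ≤ s) => mul_nonneg zero_le_two hs)
    have := (tendsto_nhdsWithin_of_tendsto_nhds tendsto_id).add ((hg0 ▸ hgc.tendsto).comp h2)
    rwa [add_zero] at this
  rw [ContinuousWithinAt, kMajorant_zero hg0]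
  refine squeeze_zero' ?_ ?_ hupper <;>
    filter_upwards [self_mem_nhdsWithin] with s (hs : 0 ≤ s)
  · exact (hg0 ▸ hg hs).trans (le_kMajorant hg hs)
  · exact kMajorant_le hg hs

lemma continuousAt_kMajorant_of_ne_zero (hg : Monotone g) {s : ℝ} (hs : s ≠ 0) :
    ContinuousAt (kMajorant g) s := by
  have hprim : Continuous fun x => ∫ t in (0 : ℝ)..x, g t :=
    intervalIntegral.continuous_primitive (fun _ _ => hg.intervalIntegrable) 0
  have : ContinuousAt
      (fun x => x + x⁻¹ * ((∫ t in (0 : ℝ)..2 * x, g t) - ∫ t in (0 : ℝ)..x, g t)) s := by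
    fun_prop (disch := exact hs)
  refine this.congr ?_
  filter_upwards [eventually_ne_nhds hs] with x hx
  exact (kMajorant_eq_of_ne_zero hg hx).symm

lemma isClassK_kMajorant (hg : Monotone g) (hg0 : g 0 = 0)
    (hgc : ContinuousWithinAt g (Ici 0) 0) : IsClassK (kMajorant g) := by
  refine ⟨fun s (hs : 0 ≤ s) => ?_, strictMonoOn_kMajorant hg, kMajorant_zero hg0⟩
  rcases hs.eq_or_lt with rfl | hs
  · exact continuousWithinAt_kMajorant_zero hg hg0 hgc
  · exact (continuousAt_kMajorant_of_ne_zero hg hs.ne').continuousWithinAt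

end Majorant

section Modulus

variable {X Y Z : Type*} [MetricSpace Y] [PseudoMetricSpace Z]
  {A : Set X} {τ : X → Y} {q : X → Z}

def relativeModulus (A : Set X) (τ : X → Y) (q : X → Z) (s : ℝ) : ℝ :=
  sSup {d | ∃ z₁ ∈ A, ∃ z₂ ∈ A, dist (τ z₁) (τ z₂) ≤ s ∧ dist (q z₁) (q z₂) = d}

lemma relativeModulus_nonneg (s : ℝ) : 0 ≤ relativeModulus A τ q s :=
  Real.sSup_nonneg (by rintro _ ⟨_, _, _, _, _, rfl⟩; exact dist_nonneg)

lemma relativeModulus_le {s c : ℝ} (hc : 0 ≤ c)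
    (h : ∀ z₁ ∈ A, ∀ z₂ ∈ A, dist (τ z₁) (τ z₂) ≤ s → dist (q z₁) (q z₂) ≤ c) :
    relativeModulus A τ q s ≤ c :=
  Real.sSup_le (by rintro _ ⟨z₁, h₁, z₂, h₂, hs, rfl⟩; exact h z₁ h₁ z₂ h₂ hs) hc

lemma relativeModulus_zero (hinj : ∀ z₁ ∈ A, ∀ z₂ ∈ A, τ z₁ = τ z₂ → q z₁ = q z₂) :
    relativeModulus A τ q 0 = 0 :=
  (relativeModulus_le le_rfl fun z₁ h₁ z₂ h₂ h => by
    rw [hinj z₁ h₁ z₂ h₂ (dist_le_zero.1 h), dist_self]).antisymm (relativeModulus_nonneg 0)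

variable [TopologicalSpace X]

lemma dist_le_relativeModulus (hA : IsCompact A) (hq : ContinuousOn q A) {s : ℝ} {z₁ z₂ : X}
    (h₁ : z₁ ∈ A) (h₂ : z₂ ∈ A) (hs : dist (τ z₁) (τ z₂) ≤ s) :
    dist (q z₁) (q z₂) ≤ relativeModulus A τ q s := by
  refine le_csSup ⟨Metric.diam (q '' A), ?_⟩ ⟨z₁, h₁, z₂, h₂, hs, rfl⟩
  rintro _ ⟨w₁, hw₁, w₂, hw₂, -, rfl⟩
  exact Metric.dist_le_diam_of_mem (hA.image_of_continuousOn hq).isBounded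
    (mem_image_of_mem q hw₁) (mem_image_of_mem q hw₂)

lemma monotone_relativeModulus (hA : IsCompact A) (hq : ContinuousOn q A) :
    Monotone (relativeModulus A τ q) :=
  fun _ _ hss' => relativeModulus_le (relativeModulus_nonneg _)
    fun _ h₁ _ h₂ hs => dist_le_relativeModulus hA hq h₁ h₂ (hs.trans hss')

lemma exists_pos_forall_dist_lt (hA : IsCompact A) (hτ : Continuous τ) (hq : Continuous q)
    (hinj : ∀ z₁ ∈ A, ∀ z₂ ∈ A, τ z₁ = τ z₂ → q z₁ = q z₂) {ε : ℝ} (hε : 0 < ε) :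
    ∃ δ > 0, ∀ z₁ ∈ A, ∀ z₂ ∈ A, dist (τ z₁) (τ z₂) < δ → dist (q z₁) (q z₂) < ε := by
  set K := (A ×ˢ A) ∩ {p | ε ≤ dist (q p.1) (q p.2)}
  have hK : IsCompact K := (hA.prod hA).inter_right (isClosed_le continuous_const (by fun_prop))
  have hpos : ∀ p ∈ K, 0 < dist (τ p.1) (τ p.2) := by
    rintro p ⟨⟨h₁, h₂⟩, hp : ε ≤ dist (q p.1) (q p.2)⟩
    refine dist_pos.2 fun h => hε.not_ge ?_
    rwa [hinj _ h₁ _ h₂ h, dist_self] at hp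
  obtain ⟨δ, hδ, hδK⟩ := hK.exists_forall_le' (by fun_prop) hpos
  refine ⟨δ, hδ, fun z₁ h₁ z₂ h₂ hlt => ?_⟩
  by_contra! hge
  exact hlt.not_ge (hδK (z₁, z₂) ⟨⟨h₁, h₂⟩, hge⟩)

lemma continuousWithinAt_relativeModulus_zero (hA : IsCompact A) (hτ : Continuous τ)
    (hq : Continuous q) (hinj : ∀ z₁ ∈ A, ∀ z₂ ∈ A, τ z₁ = τ z₂ → q z₁ = q z₂) :
    ContinuousWithinAt (relativeModulus A τ q) (Ici 0) 0 := by
  rw [Metric.continuousWithinAt_iff]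
  intro ε hε
  obtain ⟨δ, hδ, hdist⟩ := exists_pos_forall_dist_lt hA hτ hq hinj (half_pos hε)
  refine ⟨δ, hδ, fun {s} _ hs => ?_⟩
  rw [relativeModulus_zero hinj, dist_zero_right, Real.norm_of_nonneg (relativeModulus_nonneg s)]
  have hsδ : s < δ := (le_abs_self s).trans_lt (by rwa [Real.dist_0_eq_abs] at hs)
  refine (relativeModulus_le (half_pos hε).le fun z₁ h₁ z₂ h₂ hd => ?_).trans_lt (half_lt_self hε)
  exact (hdist z₁ h₁ z₂ h₂ (hd.trans_lt hsδ)).le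

end Modulus

/-- on a compact set `A`, the implication `τ(z₁) = τ(z₂) ⇒ q(z₁) = q(z₂)` can be
upgraded to a class-`K` modulus: `|q(z₁) − q(z₂)| ≤ ρ(‖τ(z₁) − τ(z₂)‖)` on `A`. -/
theorem statement_17
    (n m : ℕ) (A : Set (Fin n → ℝ)) (hA : IsCompact A)
    (τ : (Fin n → ℝ) → (Fin m → ℝ)) (q : (Fin n → ℝ) → ℝ)
    (hτ : Continuous τ) (hq : Continuous q)
    (hinj : ∀ z₁ ∈ A, ∀ z₂ ∈ A, τ z₁ = τ z₂ → q z₁ = q z₂) :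
    ∃ ρ : ℝ → ℝ, IsClassK ρ ∧
      ∀ z₁ ∈ A, ∀ z₂ ∈ A, |q z₁ - q z₂| ≤ ρ ‖τ z₁ - τ z₂‖ := by
  set g := relativeModulus A τ q
  have hg : Monotone g := monotone_relativeModulus hA hq.continuousOn
  refine ⟨kMajorant g, isClassK_kMajorant hg (relativeModulus_zero hinj)
    (continuousWithinAt_relativeModulus_zero hA hτ hq hinj), fun z₁ h₁ z₂ h₂ => ?_⟩
  rw [← Real.dist_eq, ← dist_eq_norm]
  calc dist (q z₁) (q z₂) ≤ g (dist (τ z₁) (τ z₂)) :=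
        dist_le_relativeModulus hA hq.continuousOn h₁ h₂ le_rfl
    _ ≤ kMajorant g (dist (τ z₁) (τ z₂)) := le_kMajorant hg dist_nonneg
end
end

section
/- Let A ⊂ ℝⁿ be compact and let τ : ℝⁿ → ℝ^m and q : ℝⁿ → ℝ be continuous maps such that for all z₁, z₂ ∈ A, τ(z₁) = τ(z₂) implies q(z₁) = q(z₂). Then there exists a continuous map γ : ℝ^m → ℝ such that q(z) + γ(τ(z)) = 0 for all z ∈ A. -/
/-!
Restricted to `A`, the map `τ` is a continuous surjection of the compact set `A` onto the
Hausdorff space `τ(A)`, hence a quotient map; since `-q` is constant on its fibres, it descends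
to a continuous function on the compact, hence closed, set `τ(A)`, which Tietze's theorem extends
to all of `ℝᵐ`.
-/

open Set Filter Topology Metric MeasureTheory

noncomputable section

section

universe v w

variable {X : Type*} {Y : Type v} {Z : Type w}
  [TopologicalSpace X] [TopologicalSpace Y] [TopologicalSpace Z]
  {A : Set X} {τ : X → Y} {q : X → Z}

theorem IsCompact.exists_continuousMap_image_comp_eq [T2Space Y] (hA : IsCompact A)
    (hτ : ContinuousOn τ A) (hq : ContinuousOn q A)
    (hfib : ∀ z₁ ∈ A, ∀ z₂ ∈ A, τ z₁ = τ z₂ → q z₁ = q z₂) :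
    ∃ g : C(τ '' A, Z), ∀ z : A, g (imageFactorization τ A z) = q z := by
  have : CompactSpace A := isCompact_iff_compactSpace.mp hA
  let τA : C(A, τ '' A) := ⟨imageFactorization τ A, hτ.domRestrict.subtype_mk _⟩
  let qA : C(A, Z) := ⟨A.domRestrict q, hq.domRestrict⟩
  have hquot : IsQuotientMap τA := .of_surjective_continuous imageFactorization_surjective τA.2
  have hfactors : Function.FactorsThrough qA τA :=
    fun z₁ z₂ h ↦ hfib z₁ z₁.2 z₂ z₂.2 (congrArg Subtype.val h)
  exact ⟨hquot.lift qA hfactors, DFunLike.congr_fun (hquot.lift_comp qA hfactors)⟩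

theorem IsCompact.exists_continuousMap_comp_eqOn [T2Space Y] [NormalSpace Y]
    [TietzeExtension.{v, w} Z] (hA : IsCompact A) (hτ : ContinuousOn τ A) (hq : ContinuousOn q A)
    (hfib : ∀ z₁ ∈ A, ∀ z₂ ∈ A, τ z₁ = τ z₂ → q z₁ = q z₂) :
    ∃ γ : C(Y, Z), EqOn (γ ∘ τ) q A := by
  obtain ⟨g, hg⟩ := hA.exists_continuousMap_image_comp_eq hτ hq hfib
  obtain ⟨γ, hγ⟩ := g.exists_restrict_eq (hA.image_of_continuousOn hτ).isClosed
  exact ⟨γ, fun z hz ↦ (DFunLike.congr_fun hγ _).trans (hg ⟨z, hz⟩)⟩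

end

/-- if on the compact set `A` the map `τ` determines `q` (i.e.
`τ(z₁) = τ(z₂) ⇒ q(z₁) = q(z₂)`), then there is a continuous `γ : ℝᵐ → ℝ` with
`q(z) + γ(τ(z)) = 0` on `A`. -/
theorem statement_19
    (n m : ℕ) (A : Set (Fin n → ℝ)) (hA : IsCompact A)
    (τ : (Fin n → ℝ) → (Fin m → ℝ)) (q : (Fin n → ℝ) → ℝ)
    (hτ : Continuous τ) (hq : Continuous q)
    (hinj : ∀ z₁ ∈ A, ∀ z₂ ∈ A, τ z₁ = τ z₂ → q z₁ = q z₂) :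
    ∃ γ : (Fin m → ℝ) → ℝ, Continuous γ ∧ ∀ z ∈ A, q z + γ (τ z) = 0 := by
  obtain ⟨γ, hγ⟩ := hA.exists_continuousMap_comp_eqOn hτ.continuousOn hq.neg.continuousOn
    fun z₁ h₁ z₂ h₂ h ↦ congrArg Neg.neg (hinj z₁ h₁ z₂ h₂ h)
  exact ⟨γ, γ.continuous, fun z hz ↦ by simp [show γ (τ z) = -q z from hγ hz]⟩
end
end
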